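/- Let X be a pointed space with an infinite closed discrete subspace D, and Y a pointed space with a discrete subspace E such that the closure of E equals E ∪ {0_Y} with 0_Y ∉ E and every point of E closed in E ∪ {0_Y}. Then the smash product X ∧ Y is not locally compact: the basepoint has no compact neighbourhood. If moreover X and Y are Hausdorff, X ∧ Y is not exponentiable. -/

import Mathlib

open Topology

section SmashDefs

variable {X Y : Type*} [TopologicalSpace X] [TopologicalSpace Y]

/-- The relation on `X × Y` collapsing the wedge `X × {y₀} ∪ {x₀} × Y` to a point. -/
def smashRel (x₀ : X) (y₀ : Y) : X × Y → X × Y → Prop :=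
  fun p q => p = q ∨ ((p.1 = x₀ ∨ p.2 = y₀) ∧ (q.1 = x₀ ∨ q.2 = y₀))

/-- The smash product `X ∧ Y` of pointed spaces, as the quotient `(X × Y)/(X ∨ Y)`
collapsing the wedge to a point, with the quotient topology. -/
def Smash (x₀ : X) (y₀ : Y) : Type _ := Quot (smashRel x₀ y₀)

instance (x₀ : X) (y₀ : Y) : TopologicalSpace (Smash x₀ y₀) :=
  inferInstanceAs (TopologicalSpace (Quot _))

/-- Canonical projection `η : X × Y → X ∧ Y`. -/
def Smash.mk (x₀ : X) (y₀ : Y) (p : X × Y) : Smash x₀ y₀ := Quot.mk _ p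

/-- Basepoint of the smash product. -/
def Smash.pt (x₀ : X) (y₀ : Y) : Smash x₀ y₀ := Smash.mk x₀ y₀ (x₀, y₀)

end SmashDefs

/-- A topological space `A` is exponentiable (for the cartesian product) iff the
functor `− × A` preserves quotient maps. -/
def IsExponentiable (A : Type) [TopologicalSpace A] : Prop :=
  ∀ (B C : Type) (_ : TopologicalSpace B) (_ : TopologicalSpace C) (f : B → C),
    IsQuotientMap f → IsQuotientMap (fun p : B × A => (f p.1, p.2))

/-!
Every neighbourhood `N` of the basepoint of `X ∧ Y` contains an infinite closed discrete set:
for each `d ∈ D \ {x₀}` pick `e_d ∈ E` near `y₀` with `[d, e_d] ∈ N`. Every subset of the graph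
`{(d, e_d)}` is closed in `X × Y` and misses the wedge, so it stays closed in the quotient.
A compact set cannot contain an infinite closed discrete set, which settles local compactness.

For exponentiability, let `B = 𝒩 × ℕ∞`, where `𝒩` is the discrete set of neighbourhoods of
the basepoint `a` and `ℕ∞` is the one-point compactification of `ℕ`, and let `C` collapse
`𝒩 × {∞}` to a point. Enumerating an infinite closed discrete set inside each `N ∈ 𝒩` by
`h_N : ℕ → N`, the set `{((N, n), h_N n)}` is closed and saturated in `B × A`, while its image
in `C × A` is not closed: every product neighbourhood `U × V` of `(∞, a)` meets it, at a point
`((V, n), h_V n)` with `n` large.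
-/

open Set Function
open scoped OnePoint

section ClosedDiscrete

variable {X Y : Type*} [TopologicalSpace X] [TopologicalSpace Y]

theorem isClosed_and_isDiscrete_iff_forall_subset {S : Set X} :
    IsClosed S ∧ IsDiscrete S ↔ ∀ T ⊆ S, IsClosed T := by
  refine ⟨fun h T hT => ?_, fun h => isClosed_and_discrete_iff.2 fun x => ?_⟩
  · exact (isClosed_and_discrete_iff.2 fun x =>
      (isClosed_and_discrete_iff.1 h x).mono_right (Filter.principal_mono.2 hT)).1
  · have hx : (S \ {x})ᶜ ∈ 𝓝 x :=
      (h _ sdiff_subset).isOpen_compl.mem_nhds fun hx => hx.2 rfl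
    refine Filter.disjoint_principal_right.2 ?_
    filter_upwards [nhdsWithin_le_nhds hx, self_mem_nhdsWithin] with y hy hyx hyS
    exact hy ⟨hyS, hyx⟩

theorem not_isCompact_of_mem_nhds {a : X}
    (ha : ∀ N ∈ 𝓝 a, ∃ S ⊆ N, S.Infinite ∧ IsClosed S ∧ IsDiscrete S)
    {K : Set X} (hK : K ∈ 𝓝 a) : ¬IsCompact K := fun hKc => by
  obtain ⟨S, hSK, hS_inf, hS_closed, hS_disc⟩ := ha K hK
  exact hS_inf ((hKc.of_isClosed_subset hS_closed hSK).finite hS_disc)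

theorem isClosed_singleton_of_isClosed_subtype {T : Set Y} (hT : IsClosed T) {e : Y}
    (he : e ∈ T) (h : IsClosed {z : T | (z : Y) = e}) : IsClosed ({e} : Set Y) := by
  have := h.trans hT
  rwa [show {z : T | (z : Y) = e} = Subtype.val ⁻¹' {e} from rfl, Subtype.image_preimage_coe,
    inter_eq_right.2 (singleton_subset_iff.2 he)] at this

theorem isClosed_of_forall_isClosed_preimage_prodMk {D : Type*} [TopologicalSpace D]
    [DiscreteTopology D] {s : Set (D × Y)} (h : ∀ d, IsClosed (Prod.mk d ⁻¹' s)) :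
    IsClosed s := by
  rw [← isOpen_compl_iff, isOpen_iff_mem_nhds]
  rintro ⟨d, y⟩ hy
  filter_upwards [prod_mem_nhds ((isOpen_discrete {d}).mem_nhds rfl)
    ((h d).isOpen_compl.mem_nhds hy)]
  rintro ⟨d', y'⟩ ⟨rfl, hy'⟩
  exact hy'

theorem IsClosed.isClosed_image_graph {D : Set X} (hD : IsClosed D) (hD_disc : IsDiscrete D)
    (σ : D → Y) (hσ : ∀ d, IsClosed {σ d}) (J : Set D) :
    IsClosed ((fun d : D => ((d : X), σ d)) '' J) := by
  have : DiscreteTopology D := hD_disc.to_subtype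
  have hslice : ∀ d, Prod.mk d ⁻¹' ((fun d => (d, σ d)) '' J) = {y | d ∈ J ∧ y = σ d} := by
    refine fun d => ext fun y => ⟨?_, ?_⟩
    · rintro ⟨d', hd', h⟩
      obtain ⟨rfl, rfl⟩ := Prod.mk.inj h
      exact ⟨hd', rfl⟩
    · rintro ⟨hd, rfl⟩
      exact ⟨d, hd, rfl⟩
  have hgraph : IsClosed ((fun d => (d, σ d)) '' J : Set (D × Y)) :=
    isClosed_of_forall_isClosed_preimage_prodMk fun d => by
      rw [hslice]
      by_cases hd : d ∈ J <;> simp [hd, hσ d]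
  have := (hD.isClosedEmbedding_subtypeVal.prodMap IsClosedEmbedding.id).isClosedMap _ hgraph
  rwa [image_image] at this

end ClosedDiscrete

section Exponentiable

variable {A : Type} [TopologicalSpace A]

theorem isClosed_range_graph_onePoint {ι : Type*} [TopologicalSpace ι] [DiscreteTopology ι]
    (h : ι → ℕ → A) (hinj : ∀ i, Injective (h i)) (hcl : ∀ i s, IsClosed (h i '' s)) :
    IsClosed (range fun p : ι × ℕ => ((p.1, (p.2 : OnePoint ℕ)), h p.1 p.2)) := by
  rw [← isOpen_compl_iff, isOpen_iff_mem_nhds]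
  rintro ⟨⟨i, r⟩, α⟩ hq
  set F := h i ⁻¹' {α}
  have hF : F.Finite := Subsingleton.finite fun m hm n hn => hinj i (hm.trans hn.symm)
  have hr : r ∉ ((↑) : ℕ → OnePoint ℕ) '' F := by
    rintro ⟨n, hn, rfl⟩
    have hn : h i n = α := hn
    exact hq ⟨(i, n), by simp [hn]⟩
  have hα : α ∉ h i '' Fᶜ := by
    rintro ⟨n, hn, rfl⟩
    exact hn rfl
  filter_upwards [prod_mem_nhds (prod_mem_nhds ((isOpen_discrete {i}).mem_nhds rfl)
    ((OnePoint.isOpen_compl_image_coe.2 ⟨isClosed_discrete F, hF.isCompact⟩).mem_nhds hr))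
    ((hcl i _).isOpen_compl.mem_nhds hα)]
  rintro _ ⟨⟨hk, hn⟩, hβ⟩ ⟨⟨k, n⟩, rfl⟩
  obtain rfl : k = i := hk
  exact hβ ⟨n, fun hnF => hn ⟨n, hnF, rfl⟩, rfl⟩

theorem not_isExponentiable_of_injective_families {ι : Type} [TopologicalSpace ι]
    [DiscreteTopology ι] [Nonempty ι] {a : A} (h : ι → ℕ → A) (hinj : ∀ i, Injective (h i))
    (hcl : ∀ i s, IsClosed (h i '' s)) (hnhds : ∀ V ∈ 𝓝 a, ∃ i, range (h i) ⊆ V) :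
    ¬IsExponentiable A := by
  intro hexp
  -- `C` is `ι × ℕ∞` with `ι × {∞}` collapsed to the point `none`.
  let f : ι × OnePoint ℕ → Option (ι × ℕ) := fun p => p.2.elim none fun n => some (p.1, n)
  let _ : TopologicalSpace (Option (ι × ℕ)) := .coinduced f inferInstance
  have hf : IsQuotientMap f := by
    refine ⟨⟨rfl⟩, fun c => ?_⟩
    cases c with
    | none => exact ⟨(Classical.arbitrary ι, ∞), rfl⟩
    | some p => exact ⟨(p.1, p.2), rfl⟩
  let Γ : Set (Option (ι × ℕ) × A) := range fun p : ι × ℕ => (some p, h p.1 p.2)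
  have hΓ : IsClosed Γ := by
    rw [← (hexp _ _ _ _ f hf).isClosed_preimage]
    convert isClosed_range_graph_onePoint h hinj hcl using 1
    ext ⟨⟨i, r⟩, α⟩
    induction r using OnePoint.rec <;> simp [f, Γ]
  have hΓc : Γᶜ ∈ 𝓝 (none, a) := hΓ.isOpen_compl.mem_nhds fun ⟨_, hp⟩ => by cases hp
  obtain ⟨U, hU, V, hV, hUV⟩ := mem_nhds_prod_iff.1 hΓc
  obtain ⟨i, hi⟩ := hnhds V hV
  have hUi : (fun r => f (i, r)) ⁻¹' U ∈ 𝓝 (∞ : OnePoint ℕ) :=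
    (hf.continuous.comp (Continuous.prodMk_right i)).continuousAt.preimage_mem_nhds hU
  obtain ⟨n, hn⟩ := OnePoint.denseRange_coe.mem_nhds hUi
  exact hUV (show (f (i, n), h i n) ∈ U ×ˢ V from ⟨hn, hi ⟨n, rfl⟩⟩) ⟨(i, n), rfl⟩

theorem not_isExponentiable_of_forall_mem_nhds {a : A}
    (ha : ∀ N ∈ 𝓝 a, ∃ S ⊆ N, S.Infinite ∧ IsClosed S ∧ IsDiscrete S) :
    ¬IsExponentiable A := by
  let ι := {N : Set A // N ∈ 𝓝 a}
  let _ : TopologicalSpace ι := ⊥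
  have : DiscreteTopology ι := ⟨rfl⟩
  have : Nonempty ι := ⟨⟨univ, Filter.univ_mem⟩⟩
  choose S hSN hS_inf hS using fun N : ι => ha N.1 N.2
  refine not_isExponentiable_of_injective_families (fun N n => (hS_inf N).natEmbedding _ n)
    (fun N => Subtype.val_injective.comp (Embedding.injective _)) (fun N s => ?_)
    (fun V hV => ⟨⟨V, hV⟩, ?_⟩)
  · refine isClosed_and_isDiscrete_iff_forall_subset.1 (hS N) _ ?_
    rintro _ ⟨n, -, rfl⟩
    exact Subtype.coe_prop _
  · rintro _ ⟨n, rfl⟩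
    exact hSN ⟨V, hV⟩ (Subtype.coe_prop _)

end Exponentiable

theorem smashRel_equivalence {X Y : Type*} (x₀ : X) (y₀ : Y) : Equivalence (smashRel x₀ y₀) where
  refl _ := .inl rfl
  symm := by
    rintro p q (rfl | ⟨hp, hq⟩)
    exacts [.inl rfl, .inr ⟨hq, hp⟩]
  trans := by
    rintro p q r (rfl | ⟨hp, hq⟩) (rfl | ⟨hq', hr⟩)
    exacts [.inl rfl, .inr ⟨hq', hr⟩, .inr ⟨hp, hq⟩, .inr ⟨hp, hr⟩]

namespace Smash

variable {X Y : Type*} {x₀ : X} {y₀ : Y}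

theorem eq_of_mk_eq_mk {p q : X × Y} (h : Smash.mk x₀ y₀ p = Smash.mk x₀ y₀ q)
    (h₁ : p.1 ≠ x₀) (h₂ : p.2 ≠ y₀) : p = q := by
  rcases (smashRel_equivalence x₀ y₀).eqvGen_iff.1 (Quot.eqvGen_exact h) with h | ⟨h | h, -⟩
  exacts [h, absurd h h₁, absurd h h₂]

theorem mk_basepoint_right (x : X) : Smash.mk x₀ y₀ (x, y₀) = Smash.pt x₀ y₀ :=
  Quot.sound (.inr ⟨.inr rfl, .inl rfl⟩)

variable [TopologicalSpace X] [TopologicalSpace Y]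

theorem isQuotientMap_mk : IsQuotientMap (Smash.mk x₀ y₀) :=
  isQuotientMap_quot_mk

theorem isClosed_image_mk {s : Set (X × Y)} (hs : IsClosed s)
    (hw : ∀ p ∈ s, p.1 ≠ x₀ ∧ p.2 ≠ y₀) : IsClosed (Smash.mk x₀ y₀ '' s) := by
  rw [← isQuotientMap_mk.isClosed_preimage]
  convert hs
  ext q
  refine ⟨fun ⟨p, hp, hpq⟩ => ?_, fun hq => ⟨q, hq, rfl⟩⟩
  exact eq_of_mk_eq_mk hpq (hw p hp).1 (hw p hp).2 ▸ hp

theorem exists_mk_mem_of_mem_nhds {E : Set Y} (hE : y₀ ∈ closure E) {N : Set (Smash x₀ y₀)}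
    (hN : N ∈ 𝓝 (Smash.pt x₀ y₀)) (x : X) : ∃ e ∈ E, Smash.mk x₀ y₀ (x, e) ∈ N := by
  have hcont : Continuous fun y => Smash.mk x₀ y₀ (x, y) :=
    isQuotientMap_mk.continuous.comp (Continuous.prodMk_right x)
  have hN' : (fun y => Smash.mk x₀ y₀ (x, y)) ⁻¹' N ∈ 𝓝 y₀ :=
    hcont.continuousAt.preimage_mem_nhds (by rwa [mk_basepoint_right])
  obtain ⟨e, he, heE⟩ := mem_closure_iff_nhds.1 hE _ hN'
  exact ⟨e, heE, he⟩

theorem exists_infinite_closed_discrete_subset_of_mem_nhds {D : Set X} (hD_inf : D.Infinite)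
    (hD_closed : IsClosed D) (hD_disc : IsDiscrete D) {E : Set Y} (hE : y₀ ∈ closure E)
    (hy₀ : y₀ ∉ E) (hE_closed : ∀ e ∈ E, IsClosed ({e} : Set Y))
    {N : Set (Smash x₀ y₀)} (hN : N ∈ 𝓝 (Smash.pt x₀ y₀)) :
    ∃ S ⊆ N, S.Infinite ∧ IsClosed S ∧ IsDiscrete S := by
  set D' := D \ {x₀}
  have hD'_closed : IsClosed D' :=
    isClosed_and_isDiscrete_iff_forall_subset.1 ⟨hD_closed, hD_disc⟩ _ sdiff_subset
  have : Infinite D' := (hD_inf.sdiff (finite_singleton x₀)).to_subtype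
  choose σ hσE hσN using fun d : D' => exists_mk_mem_of_mem_nhds hE hN d
  have hoff : ∀ d : D', (d : X) ≠ x₀ ∧ σ d ≠ y₀ := fun d => ⟨d.2.2, fun h => hy₀ (h ▸ hσE d)⟩
  let φ : D' → Smash x₀ y₀ := fun d => Smash.mk x₀ y₀ (d, σ d)
  have hφ : Injective φ := fun d d' h =>
    Subtype.ext (congrArg Prod.fst (eq_of_mk_eq_mk h (hoff d).1 (hoff d).2))
  refine ⟨range φ, range_subset_iff.2 hσN, infinite_range_of_injective hφ,
    isClosed_and_isDiscrete_iff_forall_subset.2 fun T hT => ?_⟩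
  rw [← image_preimage_eq_of_subset hT,
    show φ = Smash.mk x₀ y₀ ∘ fun d : D' => ((d : X), σ d) from rfl, image_comp]
  refine isClosed_image_mk ?_ (by rintro _ ⟨d, -, rfl⟩; exact hoff d)
  exact hD'_closed.isClosed_image_graph (hD_disc.mono sdiff_subset) σ
    (fun d => hE_closed _ (hσE d)) _

end Smash

theorem smash_not_locallyCompact_of_discrete_subspaces_general {X Y : Type} [TopologicalSpace X]
    [TopologicalSpace Y] (x₀ : X) (y₀ : Y)
    (D : Set X) (hD_inf : D.Infinite) (hD_closed : IsClosed D) (hD_disc : DiscreteTopology D)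
    (E : Set Y) (hE_cl : closure E = insert y₀ E)
    (hy₀ : y₀ ∉ E)
    (hE_pts : ∀ e ∈ E, IsClosed {z : (insert y₀ E : Set Y) | (z : Y) = e}) :
    (∀ K : Set (Smash x₀ y₀), K ∈ 𝓝 (Smash.pt x₀ y₀) → ¬ IsCompact K) ∧
    (T2Space X → T2Space Y → ¬ IsExponentiable (Smash x₀ y₀)) := by
  have hE_closed : ∀ e ∈ E, IsClosed ({e} : Set Y) := fun e he =>
    isClosed_singleton_of_isClosed_subtype (hE_cl ▸ isClosed_closure) (mem_insert_of_mem _ he)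
      (hE_pts e he)
  have key : ∀ N ∈ 𝓝 (Smash.pt x₀ y₀), ∃ S ⊆ N, S.Infinite ∧ IsClosed S ∧ IsDiscrete S :=
    fun N hN => Smash.exists_infinite_closed_discrete_subset_of_mem_nhds hD_inf hD_closed
      ⟨hD_disc⟩ (hE_cl ▸ mem_insert y₀ E) hy₀ hE_closed hN
  exact ⟨fun K hK => not_isCompact_of_mem_nhds key hK,
    fun _ _ => not_isExponentiable_of_forall_mem_nhds key⟩

/-- If `X` has an infinite closed discrete subspace `D`, and `Y` has a discrete
subspace `E` whose closure is the disjoint union `E ∪ {y₀}` with every point of `E`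
closed in `E ∪ {y₀}`, then the basepoint of `X ∧ Y` has no compact neighbourhood
(so `X ∧ Y` is not locally compact); if moreover `X` and `Y` are Hausdorff, then
`X ∧ Y` is not exponentiable. -/
theorem smash_not_locallyCompact_of_discrete_subspaces {X Y : Type} [TopologicalSpace X]
    [TopologicalSpace Y] (x₀ : X) (y₀ : Y)
    (D : Set X) (hD_inf : D.Infinite) (hD_closed : IsClosed D) (hD_disc : DiscreteTopology D)
    (E : Set Y) (hE_disc : DiscreteTopology E) (hE_cl : closure E = insert y₀ E)
    (hy₀ : y₀ ∉ E)
    (hE_pts : ∀ e ∈ E, IsClosed {z : (insert y₀ E : Set Y) | (z : Y) = e}) :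
    (∀ K : Set (Smash x₀ y₀), K ∈ 𝓝 (Smash.pt x₀ y₀) → ¬ IsCompact K) ∧
    (T2Space X → T2Space Y → ¬ IsExponentiable (Smash x₀ y₀)) :=
  smash_not_locallyCompact_of_discrete_subspaces_general x₀ y₀ D hD_inf hD_closed hD_disc E hE_cl
    hy₀ hE_pts
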